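/- In QHC, the axiom scheme ?(α ∧ β) ↔ ?α ∧ ?β is derivable from the rest of the deductive system (i.e., using intuitionistic logic on problems, classical logic on propositions, the rules α ⊢ ?α, p ⊢ !p, and the axioms ?!p → p, α → !?α, !(p→q) → (!p→!q), ?(α→β) → (?α→?β)). -/

import Mathlib

/- Problem (intuitionistic) formulas and proposition (classical) formulas of QHC. -/
mutual
inductive PF : Type
  | var : Nat → PF
  | bot : PF
  | and : PF → PF → PF
  | or : PF → PF → PF
  | imp : PF → PF → PF
  | bang : CF → PF
inductive CF : Type
  | var : Nat → CF
  | fls : CF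
  | and : CF → CF → CF
  | or : CF → CF → CF
  | imp : CF → CF → CF
  | quest : PF → CF
end

def PF.neg (α : PF) : PF := α.imp PF.bot
def CF.neg (p : CF) : CF := p.imp CF.fls
def PF.iff (α β : PF) : PF := (α.imp β).and (β.imp α)
def CF.iff (p q : CF) : CF := (p.imp q).and (q.imp p)
def CF.box (p : CF) : CF := CF.quest (PF.bang p)
def PF.nabla (α : PF) : PF := PF.bang (CF.quest α)

/- Derivability in QHC, parameterized by a set `Ax` of extra problem axioms
(used to treat the axiom ¬!0 and its variants uniformly). Intuitionistic logic
on problems, classical logic on propositions, the rules α ⊢ ?α and p ⊢ !p, and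
the mixed axioms ?!p → p, α → !?α, !(p→q) → (!p → !q), ?(α→β) → (?α → ?β). -/
mutual
inductive ProvP (Ax : PF → Prop) : PF → Prop
  | axm {α} : Ax α → ProvP Ax α
  | mp {α β} : ProvP Ax (α.imp β) → ProvP Ax α → ProvP Ax β
  | ak (α β : PF) : ProvP Ax (α.imp (β.imp α))
  | as (α β γ : PF) : ProvP Ax ((α.imp (β.imp γ)).imp ((α.imp β).imp (α.imp γ)))
  | andI (α β : PF) : ProvP Ax (α.imp (β.imp (α.and β)))
  | andE1 (α β : PF) : ProvP Ax ((α.and β).imp α)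
  | andE2 (α β : PF) : ProvP Ax ((α.and β).imp β)
  | orI1 (α β : PF) : ProvP Ax (α.imp (α.or β))
  | orI2 (α β : PF) : ProvP Ax (β.imp (α.or β))
  | orE (α β γ : PF) : ProvP Ax ((α.imp γ).imp ((β.imp γ).imp ((α.or β).imp γ)))
  | exf (α : PF) : ProvP Ax (PF.bot.imp α)
  | bangIntro {p} : ProvC Ax p → ProvP Ax (PF.bang p)
  | bangImp (p q : CF) : ProvP Ax ((PF.bang (p.imp q)).imp ((PF.bang p).imp (PF.bang q)))
  | bangQuest (α : PF) : ProvP Ax (α.imp (PF.bang (CF.quest α)))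
inductive ProvC (Ax : PF → Prop) : CF → Prop
  | mp {p q} : ProvC Ax (p.imp q) → ProvC Ax p → ProvC Ax q
  | ak (p q : CF) : ProvC Ax (p.imp (q.imp p))
  | as (p q r : CF) : ProvC Ax ((p.imp (q.imp r)).imp ((p.imp q).imp (p.imp r)))
  | andI (p q : CF) : ProvC Ax (p.imp (q.imp (p.and q)))
  | andE1 (p q : CF) : ProvC Ax ((p.and q).imp p)
  | andE2 (p q : CF) : ProvC Ax ((p.and q).imp q)
  | orI1 (p q : CF) : ProvC Ax (p.imp (p.or q))
  | orI2 (p q : CF) : ProvC Ax (q.imp (p.or q))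
  | orE (p q r : CF) : ProvC Ax ((p.imp r).imp ((q.imp r).imp ((p.or q).imp r)))
  | exf (p : CF) : ProvC Ax (CF.fls.imp p)
  | lem (p : CF) : ProvC Ax (p.or (p.imp CF.fls))
  | questIntro {α} : ProvP Ax α → ProvC Ax (CF.quest α)
  | questImp (α β : PF) : ProvC Ax ((CF.quest (α.imp β)).imp ((CF.quest α).imp (CF.quest β)))
  | questBang (p : CF) : ProvC Ax ((CF.quest (PF.bang p)).imp p)
end

/-- The axiom (!⊥): ¬!0. -/
def QHCAx : PF → Prop := fun α => α = (PF.bang CF.fls).imp PF.bot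

/-- Derivability of a problem in QHC. -/
def PrvP (α : PF) : Prop := ProvP QHCAx α
/-- Derivability of a proposition in QHC. -/
def PrvC (p : CF) : Prop := ProvC QHCAx p


/-! `?` behaves as a normal modality: by the rule α ⊢ ?α and the axiom ?(α → β) → (?α → ?β) it is
monotone along provable implications, which gives ?(α ∧ β) → ?α ∧ ?β from the two projections.
Conversely, applying ? to the curried pairing α → (β → α ∧ β) and distributing it twice gives
?α → (?β → ?(α ∧ β)), which uncurries to the other direction. -/

namespace ProvC

variable {Ax : PF → Prop}

theorem imp_trans {p q r : CF} (hpq : ProvC Ax (p.imp q)) (hqr : ProvC Ax (q.imp r)) :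
    ProvC Ax (p.imp r) :=
  mp (mp (as p q r) (mp (ak (q.imp r) p) hqr)) hpq

theorem imp_and {p q r : CF} (hq : ProvC Ax (p.imp q)) (hr : ProvC Ax (p.imp r)) :
    ProvC Ax (p.imp (q.and r)) :=
  mp (mp (as p r (q.and r)) (hq.imp_trans (andI q r))) hr

theorem and_imp_of_imp_imp {p q r : CF} (h : ProvC Ax (p.imp (q.imp r))) :
    ProvC Ax ((p.and q).imp r) :=
  mp (mp (as (p.and q) q r) ((andE1 p q).imp_trans h)) (andE2 p q)

theorem iff_of_imp_of_imp {p q : CF} (hpq : ProvC Ax (p.imp q)) (hqp : ProvC Ax (q.imp p)) :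
    ProvC Ax (p.iff q) :=
  mp (mp (andI _ _) hpq) hqp

theorem quest_mono {α β : PF} (h : ProvP Ax (α.imp β)) :
    ProvC Ax ((CF.quest α).imp (CF.quest β)) :=
  mp (questImp α β) (questIntro h)

theorem quest_and_imp_and_quest (α β : PF) :
    ProvC Ax ((CF.quest (α.and β)).imp ((CF.quest α).and (CF.quest β))) :=
  imp_and (quest_mono (ProvP.andE1 α β)) (quest_mono (ProvP.andE2 α β))

theorem and_quest_imp_quest_and (α β : PF) :
    ProvC Ax (((CF.quest α).and (CF.quest β)).imp (CF.quest (α.and β))) :=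
  and_imp_of_imp_imp ((quest_mono (ProvP.andI α β)).imp_trans (questImp β (α.and β)))

theorem quest_and_iff (α β : PF) :
    ProvC Ax (CF.iff (CF.quest (α.and β)) ((CF.quest α).and (CF.quest β))) :=
  iff_of_imp_of_imp (quest_and_imp_and_quest α β) (and_quest_imp_quest_and α β)

end ProvC

theorem qhc_quest_and_derivable (α β : PF) :
    ProvC (fun _ => False)
      (CF.iff (CF.quest (α.and β)) ((CF.quest α).and (CF.quest β))) :=
  ProvC.quest_and_iff α β
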